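/- (Danskin) Let Ω ⊂ ℝ^d be a nonempty compact set, and let g : ℝ × Ω → ℝ be continuous and continuously differentiable in its first argument. Define G(t) = min_{x ∈ Ω} g(t, x). If at t₀ the minimum is attained at a unique point x⋆ ∈ Ω, then G is differentiable at t₀ and G'(t₀) = (∂g/∂t)(t₀, x⋆). -/
import Mathlib


/-- Danskin: for `Ω ⊂ ℝ^d` nonempty compact and
`g : ℝ × Ω → ℝ` continuous and continuously differentiable in its first
argument, if the minimum defining `G(t) = min_{x ∈ Ω} g(t, x)` is attained at
`t₀` at a unique point `x⋆`, then `G` is differentiable at `t₀` with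
`G'(t₀) = (∂g/∂t)(t₀, x⋆)`. -/
theorem danskin {d : ℕ}
    (Ω : Set (EuclideanSpace ℝ (Fin d))) (hΩne : Ω.Nonempty) (hΩc : IsCompact Ω)
    (g : ℝ → EuclideanSpace ℝ (Fin d) → ℝ)
    (hg : ContinuousOn (fun p : ℝ × EuclideanSpace ℝ (Fin d) => g p.1 p.2)
      (Set.univ ×ˢ Ω))
    (g' : ℝ → EuclideanSpace ℝ (Fin d) → ℝ)
    (hg'deriv : ∀ x ∈ Ω, ∀ t : ℝ, HasDerivAt (fun s => g s x) (g' t x) t)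
    (hg'cont : ContinuousOn (fun p : ℝ × EuclideanSpace ℝ (Fin d) => g' p.1 p.2)
      (Set.univ ×ˢ Ω))
    (G : ℝ → ℝ) (hG : ∀ t, G t = sInf (g t '' Ω))
    (t₀ : ℝ) (xstar : EuclideanSpace ℝ (Fin d)) (hxstar : xstar ∈ Ω)
    (hmin : IsMinOn (g t₀) Ω xstar)
    (huniq : ∀ x ∈ Ω, IsMinOn (g t₀) Ω x → x = xstar) :
    HasDerivAt G (g' t₀ xstar) t₀ := by
  classical
  set L := g' t₀ xstar with hLdef
  -- continuity of g t on Ω for each fixed t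
  have hcont_t : ∀ t : ℝ, ContinuousOn (g t) Ω := by
    intro t
    have : ContinuousOn ((fun p : ℝ × EuclideanSpace ℝ (Fin d) => g p.1 p.2) ∘
        (fun y => (t, y))) Ω := by
      apply hg.comp (Continuous.continuousOn (by fun_prop))
      intro y hy
      exact ⟨Set.mem_univ _, hy⟩
    exact this
  -- choose a minimizer for each t
  have hexists : ∀ t : ℝ, ∃ x ∈ Ω, IsMinOn (g t) Ω x := fun t =>
    hΩc.exists_isMinOn hΩne (hcont_t t)
  choose x hxΩ hxmin using hexists
  have hGt : ∀ t, G t = g t (x t) := by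
    intro t
    rw [hG]
    refine IsLeast.csInf_eq ⟨⟨x t, hxΩ t, rfl⟩, ?_⟩
    rintro _ ⟨y, hy, rfl⟩
    exact isMinOn_iff.mp (hxmin t) y hy
  have hGle : ∀ t, ∀ y ∈ Ω, G t ≤ g t y := by
    intro t y hy
    rw [hGt]
    exact isMinOn_iff.mp (hxmin t) y hy
  have hGt₀ : G t₀ = g t₀ xstar := by
    rw [hG]
    refine IsLeast.csInf_eq ⟨⟨xstar, hxstar, rfl⟩, ?_⟩
    rintro _ ⟨y, hy, rfl⟩
    exact isMinOn_iff.mp hmin y hy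
  -- mean value theorem for each fixed x ∈ Ω
  have mvt : ∀ y ∈ Ω, ∀ t : ℝ, t ≠ t₀ → ∃ ξ : ℝ, |ξ - t₀| < |t - t₀| ∧
      g' ξ y = (g t y - g t₀ y) / (t - t₀) := by
    intro y hy t ht
    rcases lt_or_gt_of_ne ht with h | h
    · obtain ⟨c, hc, hceq⟩ := exists_hasDerivAt_eq_slope (fun s => g s y)
        (fun s => g' s y) h
        (fun s _ => ((hg'deriv y hy s).continuousAt).continuousWithinAt)
        (fun s _ => hg'deriv y hy s)
      obtain ⟨hc1, hc2⟩ := hc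
      refine ⟨c, ?_, ?_⟩
      · rw [abs_of_nonpos (by linarith), abs_of_nonpos (by linarith)]
        linarith
      · rw [hceq]
        rw [div_eq_div_iff (by linarith) (by intro hh; apply ht; linarith)]
        ring
    · obtain ⟨c, hc, hceq⟩ := exists_hasDerivAt_eq_slope (fun s => g s y)
        (fun s => g' s y) h
        (fun s _ => ((hg'deriv y hy s).continuousAt).continuousWithinAt)
        (fun s _ => hg'deriv y hy s)
      obtain ⟨hc1, hc2⟩ := hc
      refine ⟨c, ?_, hceq⟩
      rw [abs_of_nonneg (by linarith), abs_of_nonneg (by linarith)]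
      linarith
  rw [hasDerivAt_iff_tendsto_slope, Metric.tendsto_nhdsWithin_nhds]
  intro ε hε
  -- Step A: continuity of g' at (t₀, xstar)
  have hcw := hg'cont (t₀, xstar) ⟨Set.mem_univ _, hxstar⟩
  rw [Metric.continuousWithinAt_iff] at hcw
  obtain ⟨δ₁, hδ₁pos, hδ₁⟩ := hcw ε hε
  -- Step B: minimizers converge to xstar
  have hB : ∃ δ₂ > 0, ∀ t : ℝ, |t - t₀| < δ₂ → dist (x t) xstar < δ₁ := by
    by_cases hK : (Ω ∩ {y | δ₁ ≤ dist y xstar}).Nonempty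
    · -- K nonempty: use uniform continuity
      have hKc : IsCompact (Ω ∩ {y | δ₁ ≤ dist y xstar}) := by
        apply hΩc.inter_right
        exact isClosed_le continuous_const (continuous_id.dist continuous_const)
      obtain ⟨z, hzK, hzmin⟩ := hKc.exists_isMinOn hK
        ((hcont_t t₀).mono Set.inter_subset_left)
      have hzΩ : z ∈ Ω := hzK.1
      have hη : G t₀ < g t₀ z := by
        rcases lt_or_eq_of_le (hGle t₀ z hzΩ) with h | h
        · exact h
        · exfalso
          have hzismin : IsMinOn (g t₀) Ω z := by
            intro y hy
            have : G t₀ ≤ g t₀ y := hGle t₀ y hy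
            simp only [Set.mem_setOf_eq]
            linarith [this]
          have := huniq z hzΩ hzismin
          have hzd : δ₁ ≤ dist z xstar := hzK.2
          rw [this] at hzd
          simp at hzd
          linarith
      set η := g t₀ z - G t₀ with hηdef
      have hηpos : 0 < η := by simp [hηdef]; linarith
      -- uniform continuity of g on [t₀-1,t₀+1] × Ω
      have hPc : IsCompact ((Set.Icc (t₀ - 1) (t₀ + 1)) ×ˢ Ω) := isCompact_Icc.prod hΩc
      have hgc : ContinuousOn (fun p : ℝ × EuclideanSpace ℝ (Fin d) => g p.1 p.2)
          ((Set.Icc (t₀ - 1) (t₀ + 1)) ×ˢ Ω) :=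
        hg.mono (fun p hp => ⟨Set.mem_univ _, hp.2⟩)
      have huc := hPc.uniformContinuousOn_of_continuous hgc
      rw [Metric.uniformContinuousOn_iff] at huc
      obtain ⟨δ', hδ'pos, hδ'⟩ := huc (η / 2) (by linarith)
      refine ⟨min δ' 1, by positivity, ?_⟩
      intro t ht
      by_contra hcontra
      push_neg at hcontra
      have hxtK : x t ∈ Ω ∩ {y | δ₁ ≤ dist y xstar} := ⟨hxΩ t, hcontra⟩
      have htIcc : t ∈ Set.Icc (t₀ - 1) (t₀ + 1) := by
        have := abs_lt.mp (lt_of_lt_of_le ht (min_le_right _ _))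
        constructor <;> linarith [this.1, this.2]
      have ht₀Icc : t₀ ∈ Set.Icc (t₀ - 1) (t₀ + 1) := by
        constructor <;> linarith
      have hdist : ∀ y : EuclideanSpace ℝ (Fin d),
          dist ((t, y) : ℝ × EuclideanSpace ℝ (Fin d)) (t₀, y) < δ' := by
        intro y
        rw [Prod.dist_eq]
        simp only [dist_self]
        have : dist t t₀ < δ' := by
          rw [Real.dist_eq]
          exact lt_of_lt_of_le ht (min_le_left _ _)
        exact max_lt this hδ'pos
      have h1 := hδ' (t, x t) ⟨htIcc, hxΩ t⟩ (t₀, x t) ⟨ht₀Icc, hxΩ t⟩ (hdist (x t))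
      have h2 := hδ' (t, xstar) ⟨htIcc, hxstar⟩ (t₀, xstar) ⟨ht₀Icc, hxstar⟩ (hdist xstar)
      simp only [Real.dist_eq] at h1 h2
      have hb1 := abs_lt.mp h1
      have hb2 := abs_lt.mp h2
      -- g t₀ (x t) ≥ g t₀ z = G t₀ + η
      have h3 : g t₀ z ≤ g t₀ (x t) := isMinOn_iff.mp hzmin (x t) hxtK
      have h4 : g t (x t) ≤ g t xstar := isMinOn_iff.mp (hxmin t) xstar hxstar
      rw [hGt₀] at hηdef
      linarith [hb1.1, hb2.2]
    · -- K empty: every point of Ω is within δ₁ of xstar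
      refine ⟨1, one_pos, fun t _ => ?_⟩
      by_contra hcontra
      push_neg at hcontra
      exact hK ⟨x t, hxΩ t, hcontra⟩
  obtain ⟨δ₂, hδ₂pos, hδ₂⟩ := hB
  refine ⟨min δ₁ δ₂, lt_min hδ₁pos hδ₂pos, ?_⟩
  intro t htmem htdist
  have htne : t ≠ t₀ := htmem
  rw [Real.dist_eq] at htdist
  have htδ₁ : |t - t₀| < δ₁ := lt_of_lt_of_le htdist (min_le_left _ _)
  have htδ₂ : |t - t₀| < δ₂ := lt_of_lt_of_le htdist (min_le_right _ _)
  have hxtδ₁ : dist (x t) xstar < δ₁ := hδ₂ t htδ₂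
  obtain ⟨ξ₁, hξ₁d, hξ₁⟩ := mvt xstar hxstar t htne
  obtain ⟨ξ₂, hξ₂d, hξ₂⟩ := mvt (x t) (hxΩ t) t htne
  have hg'1 : |g' ξ₁ xstar - L| < ε := by
    have := hδ₁ (x := (ξ₁, xstar)) ⟨Set.mem_univ _, hxstar⟩ (by
      rw [Prod.dist_eq]
      simp only [dist_self]
      refine max_lt ?_ hδ₁pos
      rw [Real.dist_eq]
      exact lt_of_lt_of_le (lt_trans hξ₁d htdist) (min_le_left _ _))
    rwa [Real.dist_eq] at this
  have hg'2 : |g' ξ₂ (x t) - L| < ε := by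
    have := hδ₁ (x := (ξ₂, x t)) ⟨Set.mem_univ _, hxΩ t⟩ (by
      rw [Prod.dist_eq]
      refine max_lt ?_ hxtδ₁
      rw [Real.dist_eq]
      exact lt_of_lt_of_le (lt_trans hξ₂d htdist) (min_le_left _ _))
    rwa [Real.dist_eq] at this
  -- slope bounds
  have hslope : slope G t₀ t = (G t - G t₀) / (t - t₀) := slope_def_field G t₀ t
  rw [Real.dist_eq, hslope]
  have hub : G t - G t₀ ≤ g t xstar - g t₀ xstar := by
    have := hGle t xstar hxstar
    rw [hGt₀]; linarith
  have hlb : g t (x t) - g t₀ (x t) ≤ G t - G t₀ := by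
    have := hGle t₀ (x t) (hxΩ t)
    rw [hGt t]; linarith
  have hab1 := abs_lt.mp hg'1
  have hab2 := abs_lt.mp hg'2
  rcases lt_or_gt_of_ne htne with h | h
  · -- t < t₀ : denominator negative
    have hneg : t - t₀ < 0 := by linarith
    have h1 : (G t - G t₀) / (t - t₀) ≤ (g t (x t) - g t₀ (x t)) / (t - t₀) :=
      (div_le_div_right_of_neg hneg).mpr hlb
    have h2 : (g t xstar - g t₀ xstar) / (t - t₀) ≤ (G t - G t₀) / (t - t₀) :=
      (div_le_div_right_of_neg hneg).mpr hub
    rw [← hξ₁] at h2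
    rw [← hξ₂] at h1
    rw [abs_lt]
    constructor <;> linarith [hab1.1, hab1.2, hab2.1, hab2.2]
  · -- t₀ < t : denominator positive
    have hpos : (0:ℝ) < t - t₀ := by linarith
    have h1 : (g t (x t) - g t₀ (x t)) / (t - t₀) ≤ (G t - G t₀) / (t - t₀) :=
      (div_le_div_iff_of_pos_right hpos).mpr hlb
    have h2 : (G t - G t₀) / (t - t₀) ≤ (g t xstar - g t₀ xstar) / (t - t₀) :=
      (div_le_div_iff_of_pos_right hpos).mpr hub
    rw [← hξ₁] at h2
    rw [← hξ₂] at h1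
    rw [abs_lt]
    constructor <;> linarith [hab1.1, hab1.2, hab2.1, hab2.2]
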